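/- (Equivalence of gap relation and tanh identity) Let β > 0, μ ∈ ℝ, p ∈ ℝ³ with p² ≠ μ, and let γ ∈ (0,1), α̂ ∈ ℂ with (γ−1/2)² + |α̂|² < 1/4 and (1−2γ)/(p²−μ) > 0. Define Δ = −(p²−μ)·α̂/(γ−1/2) and E = √((p²−μ)² + |Δ|²). Then the equation p²−μ = −((2γ−1)/β) f(2√((γ−1/2)² + |α̂|²)) (with f(a) = (1/a)ln((1+a)/(1−a))) holds if and only if tanh(βE/2) = ((1−2γ)/(p²−μ))·E. -/

import Mathlib

/-!
Write `t = p² − μ`, `g = γ − 1/2` and `r = √(g² + |α̂|²) ∈ (0, 1/2)`. Then `|Δ| = |t/g|·|α̂|`, so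
`E = |t/g|·r`, and the sign condition `g/t < 0` turns the right-hand coefficient times `E` into `2r`.
Since `a·f(a) = 2 artanh a`, both the gap relation and the tanh identity say `βE/2 = artanh (2r)`.
-/

open Real

/-- `f(a) = (1/a)·ln((1+a)/(1−a))` for `a ∈ (0,1)`, with `f(0) = 2`. -/
noncomputable def fBCS (a : ℝ) : ℝ :=
  if a = 0 then 2 else (1 / a) * Real.log ((1 + a) / (1 - a))

open Set

lemma mul_fBCS {a : ℝ} (ha : a ∈ Icc (-1) 1) : a * fBCS a = 2 * artanh a := by
  rw [artanh_eq_half_log ha, fBCS]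
  split_ifs with h0
  · simp [h0]
  · field_simp

lemma tanh_eq_iff_eq_artanh {x c : ℝ} (hc : c ∈ Ioo (-1) 1) : tanh x = c ↔ x = artanh c :=
  ⟨fun h => h ▸ (artanh_tanh x).symm, fun h => h ▸ tanh_artanh hc⟩

lemma sqrt_sq_add_norm_ofReal_div_mul_sq (t : ℝ) {g : ℝ} (hg : g ≠ 0) (α : ℂ) :
    √(t ^ 2 + ‖-((t / g : ℝ) : ℂ) * α‖ ^ 2) = |t / g| * √(g ^ 2 + ‖α‖ ^ 2) := by
  rw [← sqrt_sq_eq_abs, ← sqrt_mul (sq_nonneg _), norm_mul, norm_neg, Complex.norm_real,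
    norm_eq_abs, mul_pow, sq_abs]
  congr 1
  field_simp

theorem gap_relation_iff_tanh_general (β μ : ℝ) (hβ : 0 < β)
    (p : EuclideanSpace ℝ (Fin 3)) (hp : ‖p‖ ^ 2 ≠ μ)
    (γ : ℝ) (αh : ℂ)
    (hin : (γ - 1 / 2) ^ 2 + ‖αh‖ ^ 2 < 1 / 4)
    (hsign : 0 < (1 - 2 * γ) / (‖p‖ ^ 2 - μ)) :
    (‖p‖ ^ 2 - μ =
        -((2 * γ - 1) / β) * fBCS (2 * Real.sqrt ((γ - 1 / 2) ^ 2 + ‖αh‖ ^ 2))) ↔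
      Real.tanh (β * Real.sqrt ((‖p‖ ^ 2 - μ) ^ 2 +
          ‖-(((‖p‖ ^ 2 - μ) / (γ - 1 / 2) : ℝ) : ℂ) * αh‖ ^ 2) / 2) =
        ((1 - 2 * γ) / (‖p‖ ^ 2 - μ)) *
          Real.sqrt ((‖p‖ ^ 2 - μ) ^ 2 +
            ‖-(((‖p‖ ^ 2 - μ) / (γ - 1 / 2) : ℝ) : ℂ) * αh‖ ^ 2) := by
  set t := ‖p‖ ^ 2 - μ
  set g := γ - 1 / 2
  set r := √(g ^ 2 + ‖αh‖ ^ 2)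
  have ht : t ≠ 0 := sub_ne_zero.mpr hp
  have hgt : g / t < 0 := by
    have : (1 - 2 * γ) / t = -2 * (g / t) := by ring
    linarith
  have hg : g ≠ 0 := by rintro h; simp [h] at hgt
  have hr : 0 < r := sqrt_pos.mpr (by positivity)
  have hr_lt : r < 1 / 2 := (sqrt_lt' (by norm_num)).mpr (by linarith)
  have hE : √(t ^ 2 + ‖-((t / g : ℝ) : ℂ) * αh‖ ^ 2) = -(t / g) * r := by
    rw [sqrt_sq_add_norm_ofReal_div_mul_sq t hg, abs_of_neg]
    rwa [← inv_div, inv_lt_zero]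
  have hcoef : (1 - 2 * γ) / t * (-(t / g) * r) = 2 * r := by
    field_simp
    ring
  have h2r : 2 * r ∈ Ioo (-1) 1 := ⟨by linarith, by linarith⟩
  have hartanh : artanh (2 * r) = r * fBCS (2 * r) := by
    linarith [mul_fBCS (Ioo_subset_Icc_self h2r)]
  rw [hE, hcoef, tanh_eq_iff_eq_artanh h2r, hartanh]
  field_simp
  constructor <;> intro h <;> linear_combination -h

/-- Equivalence between the Euler–Lagrange equation for `γ` and the tanh identity. -/
theorem gap_relation_iff_tanh (β μ : ℝ) (hβ : 0 < β)
    (p : EuclideanSpace ℝ (Fin 3)) (hp : ‖p‖ ^ 2 ≠ μ)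
    (γ : ℝ) (hγ0 : 0 < γ) (hγ1 : γ < 1) (αh : ℂ)
    (hin : (γ - 1 / 2) ^ 2 + ‖αh‖ ^ 2 < 1 / 4)
    (hsign : 0 < (1 - 2 * γ) / (‖p‖ ^ 2 - μ)) :
    (‖p‖ ^ 2 - μ =
        -((2 * γ - 1) / β) * fBCS (2 * Real.sqrt ((γ - 1 / 2) ^ 2 + ‖αh‖ ^ 2))) ↔
      Real.tanh (β * Real.sqrt ((‖p‖ ^ 2 - μ) ^ 2 +
          ‖-(((‖p‖ ^ 2 - μ) / (γ - 1 / 2) : ℝ) : ℂ) * αh‖ ^ 2) / 2) =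
        ((1 - 2 * γ) / (‖p‖ ^ 2 - μ)) *
          Real.sqrt ((‖p‖ ^ 2 - μ) ^ 2 +
            ‖-(((‖p‖ ^ 2 - μ) / (γ - 1 / 2) : ℝ) : ℂ) * αh‖ ^ 2) :=
  gap_relation_iff_tanh_general β μ hβ p hp γ αh hin hsign
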